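/- If C follows a hypergeometric distribution counting successes when drawing n/2 samples without replacement from a population of size n containing c successes (n even), then for every a > 0, P(C > c/2 + a) ≤ exp(-2a²/c). -/

import Mathlib

/-!
Chernoff's method: for `λ ≥ 0`, `P(C > c/2 + a) ≤ e^{-λ(c/2 + a)} E[e^{λC}]`. The hypergeometric law
is symmetric in the number of successes and the number of draws, so `C` also counts the successes
among `c` draws from a population of `n` of which `n/2` are successes. For `m` draws from a
population of `N` with `K` successes, `E[t^X] ≤ ((N - K + K t)/N)^m`, the binomial generating
function. This goes by induction on `m`: the next draw is a success with probability
`(K - X)/(N - m)`, which reduces the step to `(t - 1) (E[X t^X] - E[X] E[t^X]) ≥ 0`, an instance of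
Chebyshev's sum inequality because `k ↦ (t - 1) t^k` is monotone for `t ≥ 0`. Finally
`(1 + e^λ)/2 ≤ e^{λ/2 + λ²/8}` since `cosh x ≤ e^{x²/2}`, and the resulting exponent
`-λ a + c λ²/8` is minimised at `λ = 4a/c`.
-/

/-- The hypergeometric pmf with population `N`, successes `K`, draws `m`. -/
noncomputable def hypergeomPMF (N K m k : ℕ) : ℝ :=
  if k ≤ m then (K.choose k * (N - K).choose (m - k) : ℝ) / (N.choose m : ℝ) else 0

open Finset Real

theorem cast_choose_mul_sub (n j : ℕ) :
    (n.choose j : ℝ) * (n - j) = n.choose (j + 1) * (j + 1) := by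
  rcases le_or_gt j n with h | h
  · rw [← Nat.cast_sub h]
    exact_mod_cast (Nat.choose_succ_right_eq n j).symm
  · rw [Nat.choose_eq_zero_of_lt h, Nat.choose_eq_zero_of_lt (by omega)]
    simp

theorem choose_mul_choose_sub_comm (n a b : ℕ) :
    n.choose a * (n - a).choose b = n.choose b * (n - b).choose a := by
  have ha := Nat.choose_mul (n := n) (Nat.le_add_right a b)
  have hb := Nat.choose_mul (n := n) (Nat.le_add_left b a)
  rw [Nat.add_sub_cancel_left] at ha
  rw [Nat.add_sub_cancel] at hb
  rw [← ha, ← hb, Nat.choose_symm_add]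

theorem MonovaryOn.sum_mul_mul_sum_mul_le {ι R : Type*} [CommRing R] [LinearOrder R]
    [IsStrictOrderedRing R] {s : Finset ι} {w f g : ι → R}
    (hw : ∀ i ∈ s, 0 ≤ w i) (hfg : MonovaryOn f g s) :
    (∑ i ∈ s, w i * f i) * ∑ i ∈ s, w i * g i ≤
      (∑ i ∈ s, w i) * ∑ i ∈ s, w i * (f i * g i) := by
  have hpairs : 0 ≤ ∑ i ∈ s, ∑ j ∈ s, w i * w j * ((f j - f i) * (g j - g i)) :=
    sum_nonneg fun i hi => sum_nonneg fun j hj =>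
      mul_nonneg (mul_nonneg (hw i hi) (hw j hj)) (hfg.sub_mul_sub_nonneg hi hj)
  have hsplit : ∑ i ∈ s, ∑ j ∈ s, w i * w j * ((f j - f i) * (g j - g i)) =
      ∑ i ∈ s, ∑ j ∈ s, w i * (w j * (f j * g j))
        + ∑ i ∈ s, ∑ j ∈ s, w j * (w i * (f i * g i))
        - ∑ i ∈ s, ∑ j ∈ s, w i * f i * (w j * g j)
        - ∑ i ∈ s, ∑ j ∈ s, w j * f j * (w i * g i) := by
    simp only [← sum_add_distrib, ← sum_sub_distrib]
    exact sum_congr rfl fun i _ => sum_congr rfl fun j _ => by ring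
  have e1 : (∑ i ∈ s, w i) * ∑ i ∈ s, w i * (f i * g i) =
      ∑ i ∈ s, ∑ j ∈ s, w i * (w j * (f j * g j)) := sum_mul_sum _ _ _ _
  have e2 : (∑ i ∈ s, w i) * ∑ i ∈ s, w i * (f i * g i) =
      ∑ i ∈ s, ∑ j ∈ s, w j * (w i * (f i * g i)) := by rw [sum_mul_sum, sum_comm]
  have e3 : (∑ i ∈ s, w i * f i) * ∑ i ∈ s, w i * g i =
      ∑ i ∈ s, ∑ j ∈ s, w i * f i * (w j * g j) := sum_mul_sum _ _ _ _
  have e4 : (∑ i ∈ s, w i * f i) * ∑ i ∈ s, w i * g i =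
      ∑ i ∈ s, ∑ j ∈ s, w j * f j * (w i * g i) := by rw [sum_mul_sum, sum_comm]
  linarith

/-- The number of `m`-subsets of `K` marked and `L` unmarked items with exactly `k` marked ones,
that is `(K + L).choose m` times a hypergeometric probability; meaningful only for `k ≤ m`. -/
def hypergeomWeight (K L m k : ℕ) : ℝ := K.choose k * L.choose (m - k)

theorem hypergeomWeight_nonneg (K L m k : ℕ) : 0 ≤ hypergeomWeight K L m k := by
  unfold hypergeomWeight; positivity

theorem sum_hypergeomWeight (K L m : ℕ) :
    ∑ k ∈ range (m + 1), hypergeomWeight K L m k = (K + L).choose m := by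
  rw [Nat.add_choose_eq, Nat.sum_antidiagonal_eq_sum_range_succ_mk]
  push_cast [hypergeomWeight]
  rfl

/-- Double counting of `(m + 1)`-subsets with a distinguished element: removing it leaves an
`m`-subset with `k` marked items, and it was one of the `L - (m - k)` unmarked or `K - k` marked
items outside. -/
theorem sum_hypergeomWeight_succ (K L m : ℕ) (φ : ℕ → ℝ) :
    (m + 1) * ∑ k ∈ range (m + 2), hypergeomWeight K L (m + 1) k * φ k =
      ∑ k ∈ range (m + 1),
        hypergeomWeight K L m k * ((L + k - m) * φ k + (K - k) * φ (k + 1)) := by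
  have hL : ∀ k ∈ range (m + 1), hypergeomWeight K L m k * (L + k - m) =
      hypergeomWeight K L (m + 1) k * (m + 1 - k : ℝ) := by
    intro k hk
    have hkm : k ≤ m := Nat.lt_succ_iff.mp (mem_range.mp hk)
    have h := cast_choose_mul_sub L (m - k)
    rw [Nat.cast_sub hkm, show m - k + 1 = m + 1 - k by omega] at h
    unfold hypergeomWeight
    linear_combination (K.choose k : ℝ) * h
  have hK : ∀ k, hypergeomWeight K L m k * (K - k) =
      hypergeomWeight K L (m + 1) (k + 1) * (k + 1) := by
    intro k
    unfold hypergeomWeight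
    rw [Nat.add_sub_add_right, mul_right_comm, cast_choose_mul_sub, ← Nat.cast_add_one]
    ring
  calc (m + 1) * ∑ k ∈ range (m + 2), hypergeomWeight K L (m + 1) k * φ k
      = ∑ k ∈ range (m + 2), hypergeomWeight K L (m + 1) k * (m + 1 - k : ℝ) * φ k
        + ∑ k ∈ range (m + 2), hypergeomWeight K L (m + 1) k * k * φ k := by
        rw [mul_sum, ← sum_add_distrib]
        exact sum_congr rfl fun k _ => by ring
    _ = ∑ k ∈ range (m + 1), hypergeomWeight K L (m + 1) k * (m + 1 - k : ℝ) * φ k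
        + ∑ k ∈ range (m + 1),
          hypergeomWeight K L (m + 1) (k + 1) * (k + 1 : ℕ) * φ (k + 1) := by
        rw [sum_range_succ, sum_range_succ' (fun k => hypergeomWeight K L (m + 1) k * k * φ k)]
        simp
    _ = _ := by
        rw [← sum_add_distrib]
        refine sum_congr rfl fun k hk => ?_
        rw [mul_add, ← mul_assoc, hL k hk, ← mul_assoc, hK]
        push_cast
        ring

theorem mul_sum_hypergeomWeight_mul_self (K L m : ℕ) :
    (K + L : ℝ) * ∑ k ∈ range (m + 1), hypergeomWeight K L m k * k =
      K * m * (K + L).choose m := by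
  induction m with
  | zero => simp
  | succ m ih =>
    have hrec := sum_hypergeomWeight_succ K L m (fun k => (k : ℝ))
    have hsplit : ∑ k ∈ range (m + 1),
        hypergeomWeight K L m k * ((L + k - m) * k + (K - k) * ((k + 1 : ℕ) : ℝ)) =
          (K + L - m - 1) * ∑ k ∈ range (m + 1), hypergeomWeight K L m k * k
            + K * ∑ k ∈ range (m + 1), hypergeomWeight K L m k := by
      rw [mul_sum, mul_sum, ← sum_add_distrib]
      exact sum_congr rfl fun k _ => by push_cast; ring
    rw [hsplit, sum_hypergeomWeight] at hrec
    have hchoose := cast_choose_mul_sub (K + L) m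
    push_cast at hchoose ⊢
    refine mul_left_cancel₀ (by positivity : (m + 1 : ℝ) ≠ 0) ?_
    linear_combination
      (K + L : ℝ) * hrec + (K + L - m - 1 : ℝ) * ih + (K * (m + 1) : ℝ) * hchoose

theorem succ_mul_sum_hypergeomWeight_mul_pow_le {K L m : ℕ} (hm : m < K + L) {t : ℝ}
    (ht : 0 ≤ t) :
    (m + 1) * ∑ k ∈ range (m + 2), hypergeomWeight K L (m + 1) k * t ^ k ≤
      (K + L - m) * ((L + K * t) / (K + L)) *
        ∑ k ∈ range (m + 1), hypergeomWeight K L m k * t ^ k := by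
  set s := range (m + 1)
  set w := hypergeomWeight K L m
  set F := ∑ k ∈ s, w k * t ^ k
  set G := ∑ k ∈ s, w k * ((t - 1) * t ^ k)
  set V := ∑ k ∈ s, w k * (k * ((t - 1) * t ^ k))
  have hN : (0 : ℝ) < K + L := by exact_mod_cast (Nat.zero_le m).trans_lt hm
  have hT : (0 : ℝ) < ∑ k ∈ s, w k := by
    rw [sum_hypergeomWeight]; exact_mod_cast Nat.choose_pos hm.le
  have hmono : Monotone fun k : ℕ => (t - 1) * t ^ k :=
    monotone_nat_of_le_succ fun k => by
      rw [pow_succ]; nlinarith [mul_nonneg (pow_nonneg ht k) (sq_nonneg (t - 1))]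
  have hcheb := ((Nat.mono_cast.monovary hmono).monovaryOn (s : Set ℕ)).sum_mul_mul_sum_mul_le
    (w := w) (fun k _ => hypergeomWeight_nonneg K L m k)
  have hGV : K * m * G ≤ (K + L) * V := by
    have hmean : (K + L : ℝ) * ∑ k ∈ s, w k * k = K * m * ∑ k ∈ s, w k := by
      simpa only [s, w, sum_hypergeomWeight] using mul_sum_hypergeomWeight_mul_self K L m
    refine le_of_mul_le_mul_left ?_ hT
    calc (∑ k ∈ s, w k) * (K * m * G) = (K + L) * ((∑ k ∈ s, w k * k) * G) := by
          linear_combination -G * hmean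
      _ ≤ (K + L) * ((∑ k ∈ s, w k) * V) := mul_le_mul_of_nonneg_left hcheb hN.le
      _ = (∑ k ∈ s, w k) * ((K + L) * V) := by ring
  have hrec : (m + 1) * ∑ k ∈ range (m + 2), hypergeomWeight K L (m + 1) k * t ^ k =
      (K + L - m) * F + K * G - V := by
    rw [sum_hypergeomWeight_succ, mul_sum, mul_sum, ← sum_add_distrib, ← sum_sub_distrib]
    exact sum_congr rfl fun k _ => by ring
  have hG : G = (t - 1) * F := by
    rw [mul_sum]; exact sum_congr rfl fun k _ => by ring
  rw [hrec, mul_div_assoc', div_mul_eq_mul_div, le_div_iff₀ hN]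
  linear_combination hGV + (K + L - m) * K * hG

theorem sum_hypergeomWeight_mul_pow_le (K L : ℕ) {t : ℝ} (ht : 0 ≤ t) (m : ℕ) :
    ∑ k ∈ range (m + 1), hypergeomWeight K L m k * t ^ k ≤
      (K + L).choose m * ((L + K * t) / (K + L)) ^ m := by
  induction m with
  | zero => simp [hypergeomWeight]
  | succ m ih =>
    rcases lt_or_ge m (K + L) with hm | hm
    · have hNm : (0 : ℝ) ≤ K + L - m := by
        rw [sub_nonneg]; exact_mod_cast hm.le
      have hchoose := cast_choose_mul_sub (K + L) m
      push_cast at hchoose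
      refine le_of_mul_le_mul_left ?_ (by positivity : (0 : ℝ) < m + 1)
      calc (m + 1) * ∑ k ∈ range (m + 2), hypergeomWeight K L (m + 1) k * t ^ k
          ≤ (K + L - m) * ((L + K * t) / (K + L)) *
              ∑ k ∈ range (m + 1), hypergeomWeight K L m k * t ^ k :=
            succ_mul_sum_hypergeomWeight_mul_pow_le hm ht
        _ ≤ (K + L - m) * ((L + K * t) / (K + L)) *
              ((K + L).choose m * ((L + K * t) / (K + L)) ^ m) := by gcongr
        _ = (m + 1) * ((K + L).choose (m + 1) * ((L + K * t) / (K + L)) ^ (m + 1)) := by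
            linear_combination ((L + K * t) / (K + L)) ^ (m + 1) * hchoose
    · have hzero : ∀ k ∈ range (m + 2), hypergeomWeight K L (m + 1) k = 0 := by
        intro k _
        unfold hypergeomWeight
        rcases le_or_gt k K with hk | hk
        · rw [Nat.choose_eq_zero_of_lt (n := L) (by omega)]; simp
        · rw [Nat.choose_eq_zero_of_lt hk]; simp
      rw [sum_eq_zero fun k hk => by rw [hzero k hk, zero_mul]]
      positivity

theorem hypergeomPMF_nonneg (N K m k : ℕ) : 0 ≤ hypergeomPMF N K m k := by
  unfold hypergeomPMF; split_ifs <;> positivity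

theorem choose_mul_choose_mul_choose_comm {N K m k : ℕ} (hkK : k ≤ K) (hkm : k ≤ m) :
    K.choose k * (N - K).choose (m - k) * N.choose K =
      m.choose k * (N - m).choose (K - k) * N.choose m := by
  have hK := Nat.choose_mul (n := N) hkK
  have hm := Nat.choose_mul (n := N) hkm
  have hswap := choose_mul_choose_sub_comm (N - k) (K - k) (m - k)
  rw [show N - k - (K - k) = N - K by omega, show N - k - (m - k) = N - m by omega] at hswap
  calc K.choose k * (N - K).choose (m - k) * N.choose K
      = N.choose k * ((N - k).choose (K - k) * (N - K).choose (m - k)) := by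
        rw [← mul_assoc, ← hK]; ring
    _ = m.choose k * (N - m).choose (K - k) * N.choose m := by
        rw [hswap, ← mul_assoc, ← hm]; ring

theorem hypergeomPMF_comm {N K m : ℕ} (hK : K ≤ N) (hm : m ≤ N) (k : ℕ) :
    hypergeomPMF N K m k = hypergeomPMF N m K k := by
  unfold hypergeomPMF
  by_cases hkm : k ≤ m <;> by_cases hkK : k ≤ K
  · rw [if_pos hkm, if_pos hkK, div_eq_div_iff (by exact_mod_cast (Nat.choose_pos hm).ne')
      (by exact_mod_cast (Nat.choose_pos hK).ne')]
    exact_mod_cast choose_mul_choose_mul_choose_comm hkK hkm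
  · rw [if_pos hkm, if_neg hkK, Nat.choose_eq_zero_of_lt (not_le.mp hkK)]; simp
  · rw [if_neg hkm, if_pos hkK, Nat.choose_eq_zero_of_lt (not_le.mp hkm)]; simp
  · rw [if_neg hkm, if_neg hkK]

theorem sum_hypergeomPMF_mul_pow_le {N K m : ℕ} (hK : K ≤ N) (hm : m ≤ N) {t : ℝ}
    (ht : 0 ≤ t) :
    ∑ k ∈ range (N + 1), hypergeomPMF N K m k * t ^ k ≤ ((N - K + K * t) / N) ^ m := by
  have hsupport : ∑ k ∈ range (N + 1), hypergeomPMF N K m k * t ^ k =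
      (∑ k ∈ range (m + 1), hypergeomWeight K (N - K) m k * t ^ k) / N.choose m := by
    rw [← sum_subset (range_subset_range.mpr (by omega : m + 1 ≤ N + 1)), sum_div]
    · refine sum_congr rfl fun k hk => ?_
      rw [hypergeomPMF, if_pos (Nat.lt_succ_iff.mp (mem_range.mp hk)), hypergeomWeight]
      ring
    · intro k _ hk
      rw [hypergeomPMF, if_neg (by simpa using hk), zero_mul]
  have h := sum_hypergeomWeight_mul_pow_le K (N - K) ht m
  rw [Nat.add_sub_cancel' hK, Nat.cast_sub hK, add_sub_cancel] at h
  rw [hsupport, div_le_iff₀ (by exact_mod_cast Nat.choose_pos hm)]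
  linarith

theorem one_add_exp_div_two_le (x : ℝ) : (1 + exp x) / 2 ≤ exp (x / 2 + x ^ 2 / 8) := by
  have hcosh : (exp (x / 2) + exp (-(x / 2))) / 2 ≤ exp ((x / 2) ^ 2 / 2) := by
    simpa [cosh_eq] using cosh_le_exp_half_sq (x / 2)
  calc (1 + exp x) / 2 = exp (x / 2) * ((exp (x / 2) + exp (-(x / 2))) / 2) := by
        rw [mul_div_assoc', mul_add, ← exp_add, ← exp_add, add_neg_cancel, exp_zero, add_halves,
          add_comm]
    _ ≤ exp (x / 2) * exp ((x / 2) ^ 2 / 2) := by gcongr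
    _ = exp (x / 2 + x ^ 2 / 8) := by rw [← exp_add]; ring_nf

theorem sum_filter_lt_le_exp_mul_sum {ι : Type*} (s : Finset ι) {p X : ι → ℝ}
    (hp : ∀ i ∈ s, 0 ≤ p i) (x : ℝ) {l : ℝ} (hl : 0 ≤ l) :
    ∑ i ∈ s.filter (fun i => x < X i), p i ≤
      exp (-l * x) * ∑ i ∈ s, p i * exp (l * X i) := by
  rw [mul_sum]
  calc ∑ i ∈ s.filter (fun i => x < X i), p i
      ≤ ∑ i ∈ s.filter (fun i => x < X i), exp (-l * x) * (p i * exp (l * X i)) := by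
        refine sum_le_sum fun i hi => ?_
        obtain ⟨his, hxi⟩ := mem_filter.mp hi
        have hexp : 1 ≤ exp (-l * x) * exp (l * X i) := by
          rw [← exp_add]
          exact one_le_exp (by nlinarith)
        nlinarith [hp i his]
    _ ≤ ∑ i ∈ s, exp (-l * x) * (p i * exp (l * X i)) :=
        sum_le_sum_of_subset_of_nonneg (filter_subset _ _) fun i hi _ =>
          mul_nonneg (exp_pos _).le (mul_nonneg (hp i hi) (exp_pos _).le)

/-- Chvátal's tail bound for the hypergeometric distribution with draws `n/2`. -/
theorem chvatal_tail_bound (n c : ℕ) (hn : Even n) (hc : 0 < c) (hcn : c ≤ n)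
    (a : ℝ) (ha : 0 < a) :
    ∑ k ∈ (Finset.range (n + 1)).filter (fun k : ℕ => (c : ℝ) / 2 + a < (k : ℝ)),
      hypergeomPMF n c (n / 2) k ≤ Real.exp (-2 * a ^ 2 / c) := by
  obtain ⟨r, rfl⟩ := hn
  set l := 4 * a / c with hl_def
  have hl : 0 ≤ l := by positivity
  have hmgf : ∑ k ∈ range (r + r + 1), hypergeomPMF (r + r) c ((r + r) / 2) k * exp l ^ k ≤
      ((1 + exp l) / 2) ^ c := by
    have hr : (r + r) / 2 = r := by omega
    simp_rw [hypergeomPMF_comm hcn (Nat.div_le_self _ 2), hr]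
    convert sum_hypergeomPMF_mul_pow_le (K := r) (by omega) hcn (exp_pos l).le using 2
    have hr0 : (r : ℝ) ≠ 0 := by norm_cast; omega
    push_cast
    field_simp
    ring
  calc ∑ k ∈ (range (r + r + 1)).filter (fun k : ℕ => (c : ℝ) / 2 + a < (k : ℝ)),
        hypergeomPMF (r + r) c ((r + r) / 2) k
      ≤ exp (-l * (c / 2 + a)) *
          ∑ k ∈ range (r + r + 1), hypergeomPMF (r + r) c ((r + r) / 2) k * exp (l * k) :=
        sum_filter_lt_le_exp_mul_sum _ (fun k _ => hypergeomPMF_nonneg _ _ _ k) _ hl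
    _ ≤ exp (-l * (c / 2 + a)) * ((1 + exp l) / 2) ^ c := by
        simp_rw [mul_comm l, exp_nat_mul]
        gcongr
    _ ≤ exp (-l * (c / 2 + a)) * exp (l / 2 + l ^ 2 / 8) ^ c := by
        gcongr
        exact one_add_exp_div_two_le l
    _ = exp (-2 * a ^ 2 / c) := by
        rw [← exp_nat_mul, ← exp_add, hl_def]
        congr 1
        field_simp
        ring
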